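/- Assume p₁,…,pₙ ∈ D_Δ are distinct, all nonzero, and satisfy the Bethe equations. Fix 1 ≤ x₁ < … < xₙ ≤ N, x₀ = xₙ − N. Then for every non-constant word w ∈ 𝒲 = {L,M}^n (i.e. w ∉ {L⋯L, M⋯M}), Σ_{σ∈S_n} A_σ r_σ(w) Z_σ(w) = 0. -/

import Mathlib

open scoped BigOperators
open Complex

noncomputable section

/-- `S(x,y) = e^{-ix} + e^{iy} - 2*Delta`. -/
def Sfun (Δ x y : ℝ) : ℂ :=
  Complex.exp (-(Complex.I * (x : ℂ))) + Complex.exp (Complex.I * (y : ℂ)) - 2 * (Δ : ℂ)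

/-- `μ`, the unique solution of `cos μ = -Δ` in `[0, π)` when `Δ ∈ [-1, 1)`, and `0` when `Δ < -1`. -/
def muD (Δ : ℝ) : ℝ := if -1 ≤ Δ then Real.arccos (-Δ) else 0

/-- `D_Δ = (-π + μ, π - μ)`. -/
def Ddom (Δ : ℝ) : Set ℝ := Set.Ioo (-Real.pi + muD Δ) (Real.pi - muD Δ)

/-- `L(z) = 1 + c²z/(1-z)`. -/
def Lfun (c : ℝ) (z : ℂ) : ℂ := 1 + (c : ℂ) ^ 2 * z / (1 - z)

/-- `M(z) = 1 - c²/(1-z)`. -/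
def Mfun (c : ℝ) (z : ℂ) : ℂ := 1 - (c : ℂ) ^ 2 / (1 - z)

/-- `z_j = e^{i p_j}`. -/
def zOf {n : ℕ} (p : Fin n → ℝ) : Fin n → ℂ := fun j => Complex.exp (Complex.I * (p j : ℂ))

/-- The coefficient `A_σ`. -/
def Acoef {n : ℕ} (Δ : ℝ) (p : Fin n → ℝ) (σ : Equiv.Perm (Fin n)) : ℂ :=
  ((Equiv.Perm.sign σ : ℤ) : ℂ) *
    ∏ kl ∈ Finset.univ.filter (fun kl : Fin n × Fin n => kl.1 < kl.2),
      Complex.exp (Complex.I * (p (σ kl.1) : ℂ)) * Sfun Δ (p (σ kl.1)) (p (σ kl.2))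

/-- `Z_σ(w)`; the letter `L` is encoded by `true` and the letter `M` by `false`. -/
def Zword {n : ℕ} (x : ℕ → ℤ) (z : Fin n → ℂ) (σ : Equiv.Perm (Fin n))
    (w : Fin n → Bool) : ℂ :=
  ∏ k : Fin n, if w k then z (σ k) ^ (x (k : ℕ)) else z (σ k) ^ (x ((k : ℕ) + 1))

/-- `r_σ(w)`; the letter `L` is encoded by `true` and the letter `M` by `false`;
cyclic successor and predecessor of indices are given by `finRotate`. -/
def rword {n : ℕ} (c : ℝ) (z : Fin n → ℂ) (σ : Equiv.Perm (Fin n))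
    (w : Fin n → Bool) : ℂ :=
  (∏ k : Fin n, if w k = false ∧ w (finRotate n k) = true then
      Mfun c (z (σ k)) * Lfun c (z (σ (finRotate n k))) - 1 else 1) *
  (∏ k : Fin n, if w ((finRotate n).symm k) = true ∧ w k = true then
      Lfun c (z (σ k)) else 1) *
  (∏ k : Fin n, if w k = false ∧ w (finRotate n k) = false then
      Mfun c (z (σ k)) else 1)

/-!
Pair each `σ` with `σ * swap k (k + 1)`, where `k` is a cyclic position with `w k w (k + 1) = M L`
(one exists because `w` is not constant); the two summands are opposite. Swapping the values at
`k` and `k + 1` leaves every factor of `r_σ(w)` except the `ML` factor at `k` unchanged, and that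
factor is proportional to `e^{i p} S`; the resulting ratio is exactly compensated by `A_σ`, which
changes sign and trades `S(p_a, p_b)` for `S(p_b, p_a)` under an adjacent transposition. When
the bond wraps around, `Z_σ(w)` picks up `z^{± N}` through `x₀ = xₙ - N`; this is absorbed by
the Bethe equations, which say precisely that `A_{σ ∘ ρ} z_{σ 0}^N = A_σ` for the cyclic
rotation `ρ`.
-/

theorem finRotate_castSucc {n : ℕ} (i : Fin n) : finRotate (n + 1) i.castSucc = i.succ := by
  ext
  rw [coe_finRotate_of_ne_last (Fin.castSucc_lt_last i).ne, Fin.val_castSucc, Fin.val_succ]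

namespace Fin

variable {M : Type*} [CommMonoid M]

def orderedPairProd {n : ℕ} (H : Fin n → Fin n → M) : M :=
  ∏ ij ∈ Finset.univ.filter (fun ij : Fin n × Fin n => ij.1 < ij.2), H ij.1 ij.2

theorem orderedPairProd_eq_prod_prod {n : ℕ} (H : Fin n → Fin n → M) :
    orderedPairProd H = ∏ i, ∏ j, if i < j then H i j else 1 := by
  rw [orderedPairProd, Finset.prod_filter, Fintype.prod_prod_type]

theorem orderedPairProd_succ {n : ℕ} (H : Fin (n + 1) → Fin (n + 1) → M) :
    orderedPairProd H =
      (∏ j : Fin n, H 0 j.succ) * orderedPairProd (fun i j => H i.succ j.succ) := by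
  simp [orderedPairProd_eq_prod_prod, prod_univ_succ, succ_pos]

theorem orderedPairProd_castSucc {n : ℕ} (H : Fin (n + 1) → Fin (n + 1) → M) :
    orderedPairProd H =
      (∏ i : Fin n, H i.castSucc (last n)) *
        orderedPairProd (fun i j => H i.castSucc j.castSucc) := by
  simp [orderedPairProd_eq_prod_prod, prod_univ_castSucc, castSucc_lt_last, (le_last _).not_gt,
    Finset.prod_mul_distrib, mul_comm]

theorem orderedPairProd_comp_finRotate {n : ℕ} (H : Fin (n + 1) → Fin (n + 1) → M) :
    orderedPairProd (fun i j => H (finRotate _ i) (finRotate _ j)) * ∏ j, H 0 j =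
      orderedPairProd H * ∏ i, H i 0 := by
  rw [orderedPairProd_castSucc, orderedPairProd_succ, prod_univ_succ (H 0),
    prod_univ_succ (H · 0)]
  simp only [finRotate_castSucc, finRotate_last]
  ac_rfl

theorem orderedPairProd_comp_swap {n : ℕ} (H : Fin n → Fin n → M) {k k' : Fin n}
    (hk : (k' : ℕ) = k + 1) :
    orderedPairProd (fun i j => H (Equiv.swap k k' i) (Equiv.swap k k' j)) * H k k' =
      orderedPairProd H * H k' k := by
  set τ := Equiv.swap k k'
  have hsingle : ∀ a b : Fin n,
      H a b = ∏ ij : Fin n × Fin n, if ij = (a, b) then H ij.1 ij.2 else 1 :=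
    fun a b => (Fintype.prod_ite_eq' (a, b) fun ij => H ij.1 ij.2).symm
  have hreindex : orderedPairProd (fun i j => H (τ i) (τ j)) =
      ∏ ij : Fin n × Fin n, if τ ij.1 < τ ij.2 then H ij.1 ij.2 else 1 := by
    rw [orderedPairProd, Finset.prod_filter]
    exact Fintype.prod_equiv (τ.prodCongr τ) _ _ fun ij => by simp [τ]
  rw [hreindex, orderedPairProd, Finset.prod_filter, hsingle k k', hsingle k' k,
    ← Finset.prod_mul_distrib, ← Finset.prod_mul_distrib]
  refine Finset.prod_congr rfl fun ⟨a, b⟩ _ => ?_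
  -- `τ` preserves the order of every pair except `(k, k')`
  simp only [τ, Equiv.swap_apply_def, Prod.mk.injEq]
  split_ifs <;> simp_all [Fin.ext_iff, ← val_fin_lt] <;> omega

end Fin

theorem sum_eq_zero_of_mul_right_eq_neg {G M : Type*} [Group G] [Fintype G] [AddCommGroup M]
    [IsAddTorsionFree M] (f : G → M) (g : G) (h : ∀ a, f (a * g) = -f a) : ∑ a, f a = 0 := by
  rw [← self_eq_neg]
  calc ∑ a, f a = ∑ a, f (a * g) := (Equiv.sum_comp (Equiv.mulRight g) f).symm
    _ = -∑ a, f a := by simp only [h, Finset.sum_neg_distrib]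

theorem exists_eq_false_and_finRotate_eq_true {n : ℕ} (w : Fin n → Bool)
    (hL : w ≠ fun _ => true) (hM : w ≠ fun _ => false) :
    ∃ k, w k = false ∧ w (finRotate n k) = true := by
  by_contra! h
  obtain ⟨j, hj⟩ : ∃ j, w j = false := by simpa [funext_iff] using hL
  have := j.neZero
  refine hM (funext fun i => ?_)
  have := Function.Iterate.rec (fun a => w a = false) hj (f := finRotate n)
    (fun a ha => Bool.eq_false_iff.mpr (h a ha)) (i - j).val
  rwa [← finCycle_eq_finRotate_iterate, finCycle_apply, add_sub_cancel] at this

theorem Complex.exp_I_mul_ne_one {x : ℝ} (hx : x ∈ Set.Ioo (-Real.pi) Real.pi) (h0 : x ≠ 0) :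
    Complex.exp (Complex.I * x) ≠ 1 := by
  intro h
  have hlog := Complex.log_exp (x := Complex.I * x) (by simpa using hx.1) (by simpa using hx.2.le)
  rw [h, Complex.log_one] at hlog
  exact h0 (by simpa using hlog.symm)

theorem Ddom_subset_Ioo (Δ : ℝ) : Ddom Δ ⊆ Set.Ioo (-Real.pi) Real.pi := by
  have hμ : 0 ≤ muD Δ := by
    unfold muD
    split_ifs
    exacts [Real.arccos_nonneg _, le_rfl]
  exact Set.Ioo_subset_Ioo (by linarith) (by linarith)

section Acoef

variable {n : ℕ} (Δ : ℝ)

def pairFactor (p : Fin n → ℝ) (i j : Fin n) : ℂ := zOf p i * Sfun Δ (p i) (p j)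

theorem pairFactor_ne_zero {p : Fin n → ℝ} {i j : Fin n} (h : Sfun Δ (p i) (p j) ≠ 0) :
    pairFactor Δ p i j ≠ 0 :=
  mul_ne_zero (Complex.exp_ne_zero _) h

theorem Acoef_eq (p : Fin n → ℝ) (σ : Equiv.Perm (Fin n)) :
    Acoef Δ p σ =
      (Equiv.Perm.sign σ : ℂ) * Fin.orderedPairProd (fun i j => pairFactor Δ p (σ i) (σ j)) :=
  rfl

theorem Acoef_mul_swap (p : Fin n → ℝ) {k k' : Fin n} (hk : (k' : ℕ) = k + 1)
    (σ : Equiv.Perm (Fin n)) :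
    Acoef Δ p (σ * Equiv.swap k k') * pairFactor Δ p (σ k) (σ k') =
      -(Acoef Δ p σ * pairFactor Δ p (σ k') (σ k)) := by
  have hkk' : k ≠ k' := fun h => by simp [h] at hk
  have hswap := Fin.orderedPairProd_comp_swap (fun i j => pairFactor Δ p (σ i) (σ j)) hk
  rw [Acoef_eq, Acoef_eq, Equiv.Perm.sign_mul, Equiv.Perm.sign_swap hkk']
  simp only [Equiv.Perm.mul_apply, Units.val_mul, Units.val_neg, Units.val_one, Int.cast_mul,
    Int.cast_neg, Int.cast_one] at hswap ⊢
  linear_combination (-(Equiv.Perm.sign σ : ℂ)) * hswap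

theorem zOf_pow_mul_prod_pairFactor {N : ℕ} {Θ : ℝ → ℝ → ℝ} {p : Fin n → ℝ}
    (hS : ∀ i j, Sfun Δ (p i) (p j) ≠ 0)
    (hΘ : ∀ i j, Complex.exp (-(Complex.I * (Θ (p i) (p j) : ℂ))) =
      Complex.exp (Complex.I * ((p i : ℂ) - (p j : ℂ))) * Sfun Δ (p i) (p j) /
        Sfun Δ (p j) (p i))
    (hBE : ∀ j, Complex.exp (Complex.I * (N : ℂ) * (p j : ℂ)) =
      (-1 : ℂ) ^ (n - 1) * Complex.exp (-(Complex.I * ((∑ k, Θ (p j) (p k) : ℝ) : ℂ))))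
    (j : Fin n) :
    zOf p j ^ N * ∏ m, pairFactor Δ p m j = (-1) ^ (n - 1) * ∏ m, pairFactor Δ p j m := by
  have hfactor : ∀ m, Complex.exp (-(Complex.I * (Θ (p j) (p m) : ℂ))) =
      pairFactor Δ p j m / pairFactor Δ p m j := by
    intro m
    rw [hΘ, mul_sub, Complex.exp_sub, pairFactor, pairFactor, zOf, zOf]
    field_simp [Complex.exp_ne_zero, hS]
  have hpow : zOf p j ^ N = Complex.exp (Complex.I * (N : ℂ) * (p j : ℂ)) := by
    rw [zOf, ← Complex.exp_nat_mul]
    ring_nf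
  rw [hpow, hBE, Complex.ofReal_sum, Finset.mul_sum, ← Finset.sum_neg_distrib, Complex.exp_sum]
  simp only [hfactor, Finset.prod_div_distrib]
  field_simp [Finset.prod_ne_zero_iff.mpr fun m _ => pairFactor_ne_zero Δ (hS m j)]

variable {N : ℕ} {p : Fin (n + 1) → ℝ}
  (hBethe : ∀ j, zOf p j ^ N * ∏ m, pairFactor Δ p m j = (-1) ^ n * ∏ m, pairFactor Δ p j m)
  (hpair : ∀ i j, pairFactor Δ p i j ≠ 0)
include hBethe hpair

theorem Acoef_mul_finRotate (σ : Equiv.Perm (Fin (n + 1))) :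
    Acoef Δ p (σ * finRotate (n + 1)) * zOf p (σ 0) ^ N = Acoef Δ p σ := by
  have hrot := Fin.orderedPairProd_comp_finRotate (fun i j => pairFactor Δ p (σ i) (σ j))
  rw [Equiv.prod_comp σ (pairFactor Δ p (σ 0)), Equiv.prod_comp σ (pairFactor Δ p · (σ 0))]
    at hrot
  have hne : ∏ m, pairFactor Δ p m (σ 0) ≠ 0 :=
    Finset.prod_ne_zero_iff.mpr fun m _ => hpair _ _
  have hsq : ((-1 : ℂ) ^ n) ^ 2 = 1 := by rw [← pow_mul, mul_comm, pow_mul]; simp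
  rw [Acoef_eq, Acoef_eq, Equiv.Perm.sign_mul, sign_finRotate]
  apply mul_left_cancel₀ hne
  simp only [Equiv.Perm.mul_apply, Units.val_mul, Units.val_pow_eq_pow_val, Units.val_neg,
    Units.val_one, Int.cast_mul, Int.cast_pow, Int.cast_neg, Int.cast_one,
    Nat.add_sub_cancel] at hrot ⊢
  set P' := Fin.orderedPairProd fun i j => pairFactor Δ p (σ (finRotate (n + 1) i))
    (σ (finRotate (n + 1) j))
  set P := Fin.orderedPairProd fun i j => pairFactor Δ p (σ i) (σ j)
  linear_combination (Equiv.Perm.sign σ : ℂ) * (-1) ^ n * P' * hBethe (σ 0) +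
    (Equiv.Perm.sign σ : ℂ) * ((-1) ^ n) ^ 2 * hrot +
    (Equiv.Perm.sign σ : ℂ) * P * (∏ m, pairFactor Δ p m (σ 0)) * hsq

theorem Acoef_mul_swap_last_zero (hn : 0 < n) (σ : Equiv.Perm (Fin (n + 1))) :
    Acoef Δ p (σ * Equiv.swap (Fin.last n) 0) * pairFactor Δ p (σ (Fin.last n)) (σ 0) *
        zOf p (σ 0) ^ N =
      -(Acoef Δ p σ * pairFactor Δ p (σ 0) (σ (Fin.last n)) *
        zOf p (σ (Fin.last n)) ^ N) := by
  set ρ := finRotate (n + 1)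
  set j := ρ.symm (Fin.last n)
  have hj : ρ j = Fin.last n := ρ.apply_symm_apply _
  have hj_ne : j ≠ Fin.last n := fun h => by
    rw [h, finRotate_last, eq_comm, Fin.last_eq_zero_iff] at hj
    omega
  have hval : ((Fin.last n : Fin (n + 1)) : ℕ) = j + 1 := by
    rw [← hj, coe_finRotate_of_ne_last hj_ne]
  -- the cyclic transposition is a rotation of the adjacent one
  have hconj : Equiv.swap (Fin.last n) 0 * ρ = ρ * Equiv.swap j (Fin.last n) := by
    rw [← finRotate_last, ← hj, Equiv.swap_apply_apply, inv_mul_cancel_right]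
  have hrot' := Acoef_mul_finRotate Δ hBethe hpair (σ * Equiv.swap (Fin.last n) 0)
  have hrot := Acoef_mul_finRotate Δ hBethe hpair σ
  have hswap := Acoef_mul_swap Δ p hval (σ * ρ)
  rw [mul_assoc, hconj, ← mul_assoc] at hrot'
  simp only [Equiv.Perm.mul_apply, hj, ρ, finRotate_last, Equiv.swap_apply_right] at hrot' hswap
  linear_combination -(pairFactor Δ p (σ (Fin.last n)) (σ 0) * zOf p (σ 0) ^ N) * hrot' +
    zOf p (σ (Fin.last n)) ^ N * zOf p (σ 0) ^ N * hswap -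
    pairFactor Δ p (σ 0) (σ (Fin.last n)) * zOf p (σ (Fin.last n)) ^ N * hrot

end Acoef

/-- The factor of `r_σ(w)` carried by the cyclic bond `(k, k + 1)`, as a function of the letters
`w k`, `w (k + 1)` and of the values `z (σ k)`, `z (σ (k + 1))`. It depends on the first value
only through an `M` at `k`, and on the second only through an `L` at `k + 1`. -/
def bondWeight (c : ℝ) : Bool → Bool → ℂ → ℂ → ℂ
  | false, true, s, t => Mfun c s * Lfun c t - 1
  | true, true, _, t => Lfun c t
  | false, false, s, _ => Mfun c s
  | true, false, _, _ => 1

theorem bondWeight_congr (c : ℝ) (a b : Bool) {s s' t t' : ℂ} (hs : a = false → s = s')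
    (ht : b = true → t = t') : bondWeight c a b s t = bondWeight c a b s' t' := by
  cases a <;> cases b <;> simp_all [bondWeight]

section rword

variable {n : ℕ} (c : ℝ) (z : Fin n → ℂ) (σ : Equiv.Perm (Fin n)) (w : Fin n → Bool)

theorem rword_eq_prod_bondWeight :
    rword c z σ w = ∏ k, bondWeight c (w k) (w (finRotate n k)) (z (σ k))
      (z (σ (finRotate n k))) := by
  rw [rword, ← Equiv.prod_comp (finRotate n)
    (fun k => if w ((finRotate n).symm k) = true ∧ w k = true then Lfun c (z (σ k)) else 1)]
  simp only [Equiv.symm_apply_apply, ← Finset.prod_mul_distrib]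
  refine Finset.prod_congr rfl fun k _ => ?_
  cases w k <;> cases w (finRotate n k) <;> simp [bondWeight]

theorem rword_mul_swap {k : Fin n} (hk : w k = false) (hk' : w (finRotate n k) = true) :
    rword c z (σ * Equiv.swap k (finRotate n k)) w *
        (Mfun c (z (σ k)) * Lfun c (z (σ (finRotate n k))) - 1) =
      rword c z σ w * (Mfun c (z (σ (finRotate n k))) * Lfun c (z (σ k)) - 1) := by
  set σ' := σ * Equiv.swap k (finRotate n k)
  have hfix : ∀ j, j ≠ k → j ≠ finRotate n k → σ' j = σ j := fun j h h' => by
    rw [Equiv.Perm.mul_apply, Equiv.swap_apply_of_ne_of_ne h h']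
  have hrest : ∀ j ∈ Finset.univ.erase k,
      bondWeight c (w j) (w (finRotate n j)) (z (σ' j)) (z (σ' (finRotate n j))) =
        bondWeight c (w j) (w (finRotate n j)) (z (σ j)) (z (σ (finRotate n j))) := by
    intro j hj
    have hjk := Finset.ne_of_mem_erase hj
    refine bondWeight_congr c _ _ (fun hj' => congrArg z (hfix j hjk ?_))
      (fun hj' => congrArg z (hfix _ ?_ ((finRotate n).injective.ne hjk)))
    · rintro rfl
      simp only [hk', Bool.true_eq_false] at hj'
    · intro h
      simp only [h, hk, Bool.false_eq_true] at hj'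
  rw [rword_eq_prod_bondWeight, rword_eq_prod_bondWeight,
    ← Finset.mul_prod_erase _ _ (Finset.mem_univ k),
    ← Finset.mul_prod_erase _ _ (Finset.mem_univ k), Finset.prod_congr rfl hrest, hk, hk']
  simp only [σ', bondWeight, Equiv.Perm.mul_apply, Equiv.swap_apply_left, Equiv.swap_apply_right]
  ring

end rword

section swap

variable {n : ℕ} {c Δ : ℝ} (hΔ : Δ = (2 - c ^ 2) / 2) {p : Fin n → ℝ}
include hΔ

theorem Mfun_mul_Lfun_sub_one_mul {i j : Fin n} (hi : zOf p i ≠ 1) (hj : zOf p j ≠ 1) :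
    (Mfun c (zOf p i) * Lfun c (zOf p j) - 1) * ((1 - zOf p i) * (1 - zOf p j)) =
      -c ^ 2 * pairFactor Δ p j i := by
  have hj0 : zOf p j ≠ 0 := Complex.exp_ne_zero _
  have hpair : pairFactor Δ p j i = zOf p j * ((zOf p j)⁻¹ + zOf p i - 2 * Δ) := by
    simp only [pairFactor, Sfun, zOf, Complex.exp_neg]
  rw [hpair, hΔ, Mfun, Lfun]
  field_simp [sub_ne_zero.mpr hi.symm, sub_ne_zero.mpr hj.symm]
  push_cast
  ring

theorem rword_mul_swap_pairFactor (hc : c ≠ 0) (hz : ∀ j, zOf p j ≠ 1)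
    (σ : Equiv.Perm (Fin n)) {w : Fin n → Bool} {k : Fin n} (hk : w k = false)
    (hk' : w (finRotate n k) = true) :
    rword c (zOf p) (σ * Equiv.swap k (finRotate n k)) w *
        pairFactor Δ p (σ (finRotate n k)) (σ k) =
      rword c (zOf p) σ w * pairFactor Δ p (σ k) (σ (finRotate n k)) := by
  have hr := rword_mul_swap c (zOf p) σ w hk hk'
  have hML := Mfun_mul_Lfun_sub_one_mul hΔ (hz (σ k)) (hz (σ (finRotate n k)))
  have hML' := Mfun_mul_Lfun_sub_one_mul hΔ (hz (σ (finRotate n k))) (hz (σ k))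
  refine mul_left_cancel₀ (neg_ne_zero.mpr (pow_ne_zero 2 (Complex.ofReal_ne_zero.mpr hc))) ?_
  linear_combination -rword c (zOf p) (σ * Equiv.swap k (finRotate n k)) w * hML +
    (1 - zOf p (σ k)) * (1 - zOf p (σ (finRotate n k))) * hr + rword c (zOf p) σ w * hML'

end swap

theorem Zword_mul_swap {n : ℕ} (x : ℕ → ℤ) {z : Fin n → ℂ} (hz : ∀ j, z j ≠ 0)
    (σ : Equiv.Perm (Fin n)) {w : Fin n → Bool} {k k' : Fin n} (hkk' : k ≠ k')
    (hk : w k = false) (hk' : w k' = true) {e : ℕ} (he : x k' + e = x ((k : ℕ) + 1)) :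
    Zword x z (σ * Equiv.swap k k') w * z (σ k) ^ e = Zword x z σ w * z (σ k') ^ e := by
  set ex : Fin n → ℤ := fun j => if w j then x j else x ((j : ℕ) + 1)
  have hZ : ∀ π : Equiv.Perm (Fin n), Zword x z π w = ∏ j, z (π j) ^ ex j :=
    fun π => Finset.prod_congr rfl fun j _ => by simp only [ex]; split_ifs <;> rfl
  have hpow : ∀ i, z (σ i) ^ e = ∏ j, z (σ j) ^ (if j = i then (e : ℤ) else 0) :=
    fun i => by simp [apply_ite]
  have hswap : ∏ j, z ((σ * Equiv.swap k k') j) ^ ex j =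
      ∏ j, z (σ j) ^ ex (Equiv.swap k k' j) := by
    rw [← Equiv.prod_comp (Equiv.swap k k')]
    simp [Equiv.swap_apply_self]
  rw [hZ, hZ, hswap, hpow, hpow, ← Finset.prod_mul_distrib, ← Finset.prod_mul_distrib]
  refine Finset.prod_congr rfl fun j _ => ?_
  rw [← zpow_add₀ (hz _), ← zpow_add₀ (hz _)]
  congr 1
  rcases eq_or_ne j k with rfl | hjk
  · simp [ex, hk, hk', hkk', Equiv.swap_apply_left, ← he]
  rcases eq_or_ne j k' with rfl | hjk'
  · simp [ex, hk, hk', hjk, Equiv.swap_apply_right, ← he]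
  · simp [Equiv.swap_apply_of_ne_of_ne hjk hjk', hjk, hjk']

theorem Acoef_mul_rword_mul_Zword_mul_swap {n N : ℕ} {c Δ : ℝ} (hΔ : Δ = (2 - c ^ 2) / 2)
    (hc : c ≠ 0) {p : Fin (n + 1) → ℝ} (hz : ∀ j, zOf p j ≠ 1)
    (hpair : ∀ i j, pairFactor Δ p i j ≠ 0)
    (hBethe : ∀ j, zOf p j ^ N * ∏ m, pairFactor Δ p m j =
      (-1) ^ n * ∏ m, pairFactor Δ p j m)
    {x : ℕ → ℤ} (hx0 : x 0 = x (n + 1) - N) {w : Fin (n + 1) → Bool} {k : Fin (n + 1)}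
    (hk : w k = false) (hk' : w (finRotate (n + 1) k) = true) (σ : Equiv.Perm (Fin (n + 1))) :
    Acoef Δ p (σ * Equiv.swap k (finRotate (n + 1) k)) *
        (rword c (zOf p) (σ * Equiv.swap k (finRotate (n + 1) k)) w *
          Zword x (zOf p) (σ * Equiv.swap k (finRotate (n + 1) k)) w) =
      -(Acoef Δ p σ * (rword c (zOf p) σ w * Zword x (zOf p) σ w)) := by
  have hr := rword_mul_swap_pairFactor hΔ hc hz σ hk hk'
  have hkk' : k ≠ finRotate (n + 1) k := fun h => by
    rw [← h, hk] at hk'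
    exact Bool.false_ne_true hk'
  have hz0 : ∀ j, zOf p j ≠ 0 := fun j => Complex.exp_ne_zero _
  generalize hk'def : finRotate (n + 1) k = k' at *
  -- `y = y' = 1` for an inner bond; `y`, `y'` are the `N`-th powers for the wrapping bond
  obtain ⟨y, y', hy, hy', hA, hZ⟩ : ∃ y y' : ℂ, y ≠ 0 ∧ y' ≠ 0 ∧
      Acoef Δ p (σ * Equiv.swap k k') * pairFactor Δ p (σ k) (σ k') * y' =
        -(Acoef Δ p σ * pairFactor Δ p (σ k') (σ k) * y) ∧
      Zword x (zOf p) (σ * Equiv.swap k k') w * y = Zword x (zOf p) σ w * y' := by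
    rcases eq_or_ne k (Fin.last n) with rfl | hlast
    · rw [finRotate_last] at hk'def
      subst hk'def
      have hn : 0 < n := Nat.pos_of_ne_zero fun h => hkk' (by subst h; rfl)
      exact ⟨_, _, pow_ne_zero N (hz0 (σ (Fin.last n))), pow_ne_zero N (hz0 (σ 0)),
        Acoef_mul_swap_last_zero Δ hBethe hpair hn σ,
        Zword_mul_swap x hz0 σ hkk' hk hk' (by simp [hx0])⟩
    · have hval : (k' : ℕ) = k + 1 := hk'def ▸ coe_finRotate_of_ne_last hlast
      refine ⟨1, 1, one_ne_zero, one_ne_zero, by simpa using Acoef_mul_swap Δ p hval σ, ?_⟩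
      simpa using Zword_mul_swap x hz0 σ hkk' hk hk' (e := 0) (by simp [hval])
  set g := pairFactor Δ p (σ k) (σ k')
  set g' := pairFactor Δ p (σ k') (σ k)
  set Z' := Zword x (zOf p) (σ * Equiv.swap k k') w
  refine mul_right_cancel₀ (mul_ne_zero (mul_ne_zero (mul_ne_zero (hpair (σ k) (σ k'))
    (hpair (σ k') (σ k))) hy) hy') ?_
  linear_combination
    rword c (zOf p) (σ * Equiv.swap k k') w * Z' * g' * y * hA -
    Acoef Δ p σ * g' * y ^ 2 * Z' * hr -
    Acoef Δ p σ * rword c (zOf p) σ w * g * g' * y * hZ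

theorem sum_nonconstant_word_eq_zero_general
    (N n : ℕ)
    (c : ℝ) (hc : 0 < c) (Δ : ℝ) (hΔ : Δ = (2 - c ^ 2) / 2)
    (Θ : ℝ → ℝ → ℝ)
    (hΘ : ∀ a ∈ Ddom Δ, ∀ b ∈ Ddom Δ,
      Complex.exp (-(Complex.I * (Θ a b : ℂ))) =
        Complex.exp (Complex.I * ((a : ℂ) - (b : ℂ))) * Sfun Δ a b / Sfun Δ b a)
    (p : Fin n → ℝ) (hpD : ∀ j, p j ∈ Ddom Δ)
    (hnonzero : ∀ j, p j ≠ 0)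
    (hBE : ∀ j, Complex.exp (Complex.I * (N : ℂ) * (p j : ℂ)) =
      (-1 : ℂ) ^ (n - 1) *
        Complex.exp (-(Complex.I * ((∑ k, Θ (p j) (p k) : ℝ) : ℂ))))
    (x : ℕ → ℤ) (hx0 : x 0 = x n - N)
    (w : Fin n → Bool)
    (hwL : w ≠ fun _ => true) (hwM : w ≠ fun _ => false) :
    ∑ σ : Equiv.Perm (Fin n),
        Acoef Δ p σ * (rword c (zOf p) σ w * Zword x (zOf p) σ w) = 0 := by
  obtain ⟨k, hk, hk'⟩ := exists_eq_false_and_finRotate_eq_true w hwL hwM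
  cases n with
  | zero => exact k.elim0
  | succ n =>
  -- a vanishing `S` would turn the right side of `hΘ` into `_ / 0 = 0`, not an exponential
  have hS : ∀ i j, Sfun Δ (p i) (p j) ≠ 0 := fun i j h => by
    simpa [h] using hΘ (p j) (hpD j) (p i) (hpD i)
  have hz : ∀ j, zOf p j ≠ 1 := fun j =>
    Complex.exp_I_mul_ne_one (Ddom_subset_Ioo Δ (hpD j)) (hnonzero j)
  have hBethe := zOf_pow_mul_prod_pairFactor Δ hS (fun i j => hΘ _ (hpD i) _ (hpD j)) hBE
  rw [Nat.add_sub_cancel] at hBethe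
  exact sum_eq_zero_of_mul_right_eq_neg _ _ <| Acoef_mul_rword_mul_Zword_mul_swap hΔ hc.ne' hz
    (fun i j => pairFactor_ne_zero Δ (hS i j)) hBethe hx0 hk hk'

/-- **Cancellation for non-constant words (Lemma 3.6).** -/
theorem sum_nonconstant_word_eq_zero
    (N n : ℕ) (hN : 0 < N)
    (c : ℝ) (hc : 0 < c) (Δ : ℝ) (hΔ : Δ = (2 - c ^ 2) / 2)
    (Θ : ℝ → ℝ → ℝ)
    (hΘcont : ContinuousOn (fun q : ℝ × ℝ => Θ q.1 q.2) (Ddom Δ ×ˢ Ddom Δ))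
    (hΘzero : Θ 0 0 = 0)
    (hΘ : ∀ a ∈ Ddom Δ, ∀ b ∈ Ddom Δ,
      Complex.exp (-(Complex.I * (Θ a b : ℂ))) =
        Complex.exp (Complex.I * ((a : ℂ) - (b : ℂ))) * Sfun Δ a b / Sfun Δ b a)
    (p : Fin n → ℝ) (hpD : ∀ j, p j ∈ Ddom Δ)
    (hdistinct : Function.Injective p)
    (hnonzero : ∀ j, p j ≠ 0)
    (hBE : ∀ j, Complex.exp (Complex.I * (N : ℂ) * (p j : ℂ)) =
      (-1 : ℂ) ^ (n - 1) *
        Complex.exp (-(Complex.I * ((∑ k, Θ (p j) (p k) : ℝ) : ℂ))))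
    (x : ℕ → ℤ) (hx0 : x 0 = x n - N)
    (hxmono : ∀ i j, i < j → j ≤ n → x i < x j)
    (hx1 : 1 ≤ x 1) (hxN : x n ≤ (N : ℤ))
    (w : Fin n → Bool)
    (hwL : w ≠ fun _ => true) (hwM : w ≠ fun _ => false) :
    ∑ σ : Equiv.Perm (Fin n),
        Acoef Δ p σ * (rword c (zOf p) σ w * Zword x (zOf p) σ w) = 0 :=
  sum_nonconstant_word_eq_zero_general N n c hc Δ hΔ Θ hΘ p hpD hnonzero hBE x hx0 w hwL hwM
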